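/- arXiv:2002.09065 — 4 statements merged into one kernel-verified Lean document; each statement's English description precedes it below -/
import Mathlib

section
/- For all u, v ∈ [-1, 1] and all α, β ≥ 0 with α + β > 0, one has (1+u)(1+v) - (2/(α+β))·(α·u·(1+v) + β·v·(1+u)) ≥ 0. -/
theorem one_add_mul_one_add_sub_div_mul_eq {K : Type*} [Field K] {u v α β : K}
    (hαβ : α + β ≠ 0) :
    (1 + u) * (1 + v) - 2 / (α + β) * (α * u * (1 + v) + β * v * (1 + u)) =
      (α * (1 - u) * (1 + v) + β * (1 + u) * (1 - v)) / (α + β) := by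
  field_simp
  ring

theorem measure_positivity (u v α β : ℝ) (hu : u ∈ Set.Icc (-1 : ℝ) 1)
    (hv : v ∈ Set.Icc (-1 : ℝ) 1) (hα : 0 ≤ α) (hβ : 0 ≤ β) (hαβ : 0 < α + β) :
    0 ≤ (1 + u) * (1 + v) - 2 / (α + β) * (α * u * (1 + v) + β * v * (1 + u)) := by
  obtain ⟨hu₁, hu₂⟩ := hu
  obtain ⟨hv₁, hv₂⟩ := hv
  rw [one_add_mul_one_add_sub_div_mul_eq hαβ.ne']
  have hα_term : 0 ≤ α * (1 - u) * (1 + v) := by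
    apply mul_nonneg (mul_nonneg hα _) <;> linarith
  have hβ_term : 0 ≤ β * (1 + u) * (1 - v) := by
    apply mul_nonneg (mul_nonneg hβ _) <;> linarith
  exact div_nonneg (add_nonneg hα_term hβ_term) hαβ.le
end

section
/- Let k ≥ 1 be an integer, b > 0 a real number, ξ ∈ [-1,1], and q = arccos(ξ). Then for all complex s with Re(s) large enough, setting S = √(s² - b²), one has (s+S)^k - 2·b^k·ξ + (s-S)^k = 2^k · ∏_{l=0}^{k-1} (s - b·cos((q - 2πl)/k)). -/
/-!
Put `S = √(s² - b²)`, `u = s + S` and `v = s - S`, so that `u v = b²` and `u + v = 2 s`.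
With `ω = exp (i q / k)` we have `(b ω)ᵏ + (b ω⁻¹)ᵏ = 2 bᵏ ξ`, hence
`uᵏ (uᵏ - 2 bᵏ ξ + vᵏ) = (uᵏ - (b ω)ᵏ) (uᵏ - (b ω⁻¹)ᵏ)`. Splitting both factors over the
`k`-th roots of unity and pairing the root `b ζˡ ω` with its inverse partner `b (ζˡ ω)⁻¹`
turns each pair into `u (u + v - 2 b cos θₗ)`, where `ζˡ ω = exp (i θₗ)`.
-/

open Complex Finset

theorem IsPrimitiveRoot.pow_sub_pow_eq_prod_range {R : Type*} [CommRing R] [IsDomain R]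
    {ζ : R} {k : ℕ} (hζ : IsPrimitiveRoot ζ k) (hk : 0 < k) (u α : R) :
    u ^ k - α ^ k = ∏ l ∈ range k, (u - ζ ^ l * α) := by
  simpa [Polynomial.eval_prod] using
    congrArg (Polynomial.eval u) (X_pow_sub_C_eq_prod hζ hk rfl)

theorem pow_mul_pow_sub_add_pow {R : Type*} [CommRing R] {u v α β : R}
    (h : u * v = α * β) (k : ℕ) :
    u ^ k * (u ^ k - (α ^ k + β ^ k) + v ^ k) = (u ^ k - α ^ k) * (u ^ k - β ^ k) := by
  have hk : u ^ k * v ^ k = α ^ k * β ^ k := by rw [← mul_pow, ← mul_pow, h]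
  linear_combination hk

theorem sub_mul_mul_sub_mul_inv {K : Type*} [Field K] {u v b w : K}
    (huv : u * v = b ^ 2) (hw : w ≠ 0) :
    (u - b * w) * (u - b * w⁻¹) = u * (u + v - b * (w + w⁻¹)) := by
  linear_combination b ^ 2 * mul_inv_cancel₀ hw - huv

theorem IsPrimitiveRoot.pow_sub_mul_pow_sub_eq_prod {K : Type*} [Field K] {ζ : K} {k : ℕ}
    (hζ : IsPrimitiveRoot ζ k) (hk : 0 < k) {u v b ω : K} (huv : u * v = b ^ 2) (hω : ω ≠ 0) :
    (u ^ k - (b * ω) ^ k) * (u ^ k - (b * ω⁻¹) ^ k)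
      = ∏ l ∈ range k, u * (u + v - b * (ζ ^ l * ω + (ζ ^ l * ω)⁻¹)) := by
  rw [hζ.pow_sub_pow_eq_prod_range hk, hζ.inv.pow_sub_pow_eq_prod_range hk,
    ← prod_mul_distrib]
  refine prod_congr rfl fun l _ => ?_
  rw [← sub_mul_mul_sub_mul_inv huv (mul_ne_zero (pow_ne_zero l (hζ.ne_zero hk.ne')) hω),
    inv_pow, mul_inv]
  ring

namespace Complex

theorem exp_mul_I_add_inv (θ : ℂ) : exp (θ * I) + (exp (θ * I))⁻¹ = 2 * cos θ := by
  rw [two_cos, ← exp_neg, neg_mul]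

theorem inv_exp_two_pi_I_div_pow_mul (k l : ℕ) (hk : k ≠ 0) (q : ℝ) :
    (exp (2 * Real.pi * I / k))⁻¹ ^ l * exp (q / k * I)
      = exp (((q - 2 * Real.pi * l) / k : ℝ) * I) := by
  rw [← exp_neg, ← exp_nat_mul, ← exp_add]
  congr 1
  push_cast
  field_simp
  ring

end Complex

open Complex in
theorem dihedral_factorization (k : ℕ) (hk : 1 ≤ k) (b : ℝ) (hb : 0 < b)
    (ξ : ℝ) (hξ : ξ ∈ Set.Icc (-1 : ℝ) 1) :
    ∃ M : ℝ, ∀ s : ℂ, M < s.re →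
      (s + (s ^ 2 - (b : ℂ) ^ 2) ^ ((1 : ℂ)/2)) ^ k - 2 * (b : ℂ) ^ k * (ξ : ℂ)
          + (s - (s ^ 2 - (b : ℂ) ^ 2) ^ ((1 : ℂ)/2)) ^ k
        = 2 ^ k * ∏ l ∈ Finset.range k,
            (s - (b * Real.cos ((Real.arccos ξ - 2 * Real.pi * l) / k) : ℝ)) := by
  refine ⟨0, fun s _ => ?_⟩
  set S := (s ^ 2 - (b : ℂ) ^ 2) ^ ((1 : ℂ) / 2)
  have hS : S ^ 2 = s ^ 2 - (b : ℂ) ^ 2 := by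
    simp only [S, one_div]; exact cpow_ofNat_inv_pow _ 2
  have huv : (s + S) * (s - S) = (b : ℂ) ^ 2 := by linear_combination -hS
  have hu : s + S ≠ 0 :=
    left_ne_zero_of_mul (huv ▸ pow_ne_zero 2 (ofReal_ne_zero.2 hb.ne'))
  set ω := exp (Real.arccos ξ / k * I)
  have hω : ω ≠ 0 := exp_ne_zero _
  have hξ' : (b * ω) ^ k + (b * ω⁻¹) ^ k = 2 * (b : ℂ) ^ k * ξ := by
    rw [mul_pow, mul_pow, inv_pow, ← exp_nat_mul,
      show (k : ℂ) * (Real.arccos ξ / k * I) = Real.arccos ξ * I by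
        field_simp [Nat.cast_ne_zero.2 (by omega : k ≠ 0)],
      ← mul_add, exp_mul_I_add_inv, ← ofReal_cos, Real.cos_arccos hξ.1 hξ.2]
    ring
  refine mul_left_cancel₀ (pow_ne_zero k hu) ?_
  have hpow : ((s + S) * 2) ^ k = ∏ _l ∈ range k, (s + S) * 2 := by rw [prod_const, card_range]
  rw [← hξ', pow_mul_pow_sub_add_pow (huv.trans (by field_simp)),
    (isPrimitiveRoot_exp k (by omega)).inv.pow_sub_mul_pow_sub_eq_prod hk huv hω,
    ← mul_assoc, ← mul_pow, hpow, ← prod_mul_distrib]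
  refine prod_congr rfl fun l _ => ?_
  rw [inv_exp_two_pi_I_div_pow_mul k l (by omega), exp_mul_I_add_inv]
  push_cast
  ring
end

section
/- For the rank-one Dunkl operator with parameter k > 0, the operator V_k defined on polynomials p of one variable by V_k(p)(x) = (Γ(k+1/2)/(Γ(1/2)Γ(k))) ∫₋₁¹ p(xt)(1-t)^{k-1}(1+t)^k dt satisfies V_k(1) = 1 and T V_k(p) = V_k(p') for all polynomials p, where Tf(x) = f'(x) + k·(f(x)-f(-x))/x. -/
/-!
On monomials `V_k` is diagonal: `V_k(X^n) = μ_n X^n`, where `μ_n` is the `n`-th moment of the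
probability density on `[-1, 1]` proportional to `(1-t)^(k-1) (1+t)^k`, while `T` lowers degrees,
`T(X^(n+1)) = (n + 1 + k(1 - (-1)^(n+1))) X^n`. Comparing coefficients, the intertwining relation
is the moment recurrence `(n + 1 + k(1 - (-1)^(n+1))) μ_(n+1) = (n + 1) μ_n`. Since
`(1-t)^(k-1) (1+t)^k = (1-t²)^(k-1) (1+t)`, each `μ_n` is the sum of the `n`-th and `(n+1)`-st
moments of the even weight `(1-t²)^(k-1)`; its odd moments vanish and its even ones satisfy
`(n + 2k + 1) ν_(n+2) = (n + 1) ν_n`, from integrating the derivative of `t^(n+1) (1-t²)^k`.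
Finally `V_k 1 = μ_0 = 1` is a Beta integral combined with Legendre's duplication formula.
-/

/-- The rank-one Dunkl operator with multiplicity `k`. -/
noncomputable def dunklT1 (k : ℝ) (f : ℝ → ℝ) (x : ℝ) : ℝ :=
  deriv f x + k * (f x - f (-x)) / x

/-- The rank-one Dunkl intertwining operator. -/
noncomputable def dunklV1 (k : ℝ) (p : Polynomial ℝ) (x : ℝ) : ℝ :=
  (Real.Gamma (k + 1/2) / (Real.Gamma (1/2) * Real.Gamma k)) *
    ∫ t in (-1:ℝ)..1, p.eval (x * t) * (1 - t) ^ (k - 1) * (1 + t) ^ k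

open Polynomial MeasureTheory Set

lemma Real.Gamma_mul_Gamma_eq_integral {a b : ℝ} (ha : 0 < a) (hb : 0 < b) :
    Gamma a * Gamma b = Gamma (a + b) * ∫ x in (0:ℝ)..1, x ^ (a - 1) * (1 - x) ^ (b - 1) := by
  have h := Complex.Gamma_mul_Gamma_eq_betaIntegral (s := a) (t := b)
    (by simpa using ha) (by simpa using hb)
  rw [← Complex.ofReal_inj]
  push_cast
  rw [← Complex.Gamma_ofReal, ← Complex.Gamma_ofReal, h, ← Complex.Gamma_ofReal,
    Complex.ofReal_add, Complex.betaIntegral, ← intervalIntegral.integral_ofReal]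
  congr 1
  refine intervalIntegral.integral_congr fun x hx => ?_
  rw [uIcc_of_le zero_le_one] at hx
  push_cast
  rw [Complex.ofReal_cpow hx.1, Complex.ofReal_cpow (by linarith [hx.2])]
  push_cast
  ring

lemma Polynomial.coeff_comp_neg_X {R : Type*} [CommRing R] (q : R[X]) (n : ℕ) :
    (q.comp (-X)).coeff n = (-1) ^ n * q.coeff n := by
  induction q using Polynomial.induction_on' with
  | add p q hp hq => rw [add_comp, coeff_add, coeff_add, hp, hq, mul_add]
  | monomial m a =>
    rw [monomial_comp, neg_pow, ← C_1, ← C_neg, ← C_pow, mul_left_comm, coeff_C_mul,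
      coeff_C_mul_X_pow, coeff_monomial]
    split_ifs <;> simp_all

noncomputable def jacobiWeight (a b t : ℝ) : ℝ := (1 - t) ^ a * (1 + t) ^ b

noncomputable def jacobiMoment (a b : ℝ) (n : ℕ) : ℝ :=
  ∫ t in (-1:ℝ)..1, t ^ n * jacobiWeight a b t

lemma intervalIntegrable_mul_jacobiWeight {a b : ℝ} (ha : -1 < a) (hb : -1 < b) {g : ℝ → ℝ}
    (hg : Continuous g) :
    IntervalIntegrable (fun t => g t * jacobiWeight a b t) volume (-1) 1 := by
  have hsing_right : IntervalIntegrable (fun t : ℝ => (1 - t) ^ a) volume 0 1 := by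
    simpa using (intervalIntegral.intervalIntegrable_rpow' (a := 1) (b := 0) ha).comp_sub_left 1
  have hsing_left : IntervalIntegrable (fun t : ℝ => (1 + t) ^ b) volume (-1) 0 := by
    simpa [add_comm] using
      (intervalIntegral.intervalIntegrable_rpow' (a := 0) (b := 1) hb).comp_add_right 1
  have hcont_left : ContinuousOn (fun t => g t * (1 - t) ^ a) (uIcc (-1) 0) :=
    hg.continuousOn.mul <| (continuous_sub_left 1).continuousOn.rpow_const fun t ht =>
      Or.inl (by rw [uIcc_of_le (by norm_num)] at ht; linarith [ht.2])
  have hcont_right : ContinuousOn (fun t => g t * (1 + t) ^ b) (uIcc 0 1) :=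
    hg.continuousOn.mul <| (continuous_const_add 1).continuousOn.rpow_const fun t ht =>
      Or.inl (by rw [uIcc_of_le (by norm_num)] at ht; linarith [ht.1])
  refine IntervalIntegrable.trans (b := 0) ?_ ?_
  · exact (hsing_left.continuousOn_mul hcont_left).congr fun t _ => by
      simp only [jacobiWeight]; ring
  · exact (hsing_right.continuousOn_mul hcont_right).congr fun t _ => by
      simp only [jacobiWeight]; ring

lemma jacobiMoment_add_one_right {a b : ℝ} (ha : -1 < a) (hb : -1 < b) (n : ℕ) :
    jacobiMoment a (b + 1) n = jacobiMoment a b n + jacobiMoment a b (n + 1) := by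
  rw [jacobiMoment, jacobiMoment, jacobiMoment, ← intervalIntegral.integral_add
    (intervalIntegrable_mul_jacobiWeight ha hb (continuous_pow n))
    (intervalIntegrable_mul_jacobiWeight ha hb (continuous_pow (n + 1)))]
  refine intervalIntegral.integral_congr_Ioo_of_le (by norm_num) fun t ht => ?_
  simp only [jacobiWeight, Real.rpow_add_one (by linarith [ht.1] : 1 + t ≠ 0)]
  ring

lemma jacobiMoment_self_of_odd (a : ℝ) {n : ℕ} (hn : Odd n) : jacobiMoment a a n = 0 := by
  have hodd (t : ℝ) : (-t) ^ n * jacobiWeight a a (-t) = -(t ^ n * jacobiWeight a a t) := by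
    simp only [jacobiWeight, hn.neg_pow, sub_neg_eq_add, ← sub_eq_add_neg]
    ring
  have h := intervalIntegral.integral_comp_neg (a := -1) (b := 1)
    fun t => t ^ n * jacobiWeight a a t
  simp only [hodd, intervalIntegral.integral_neg, neg_neg] at h
  rw [jacobiMoment]
  linarith

lemma jacobiWeight_self {a t : ℝ} (ht : t ∈ Icc (-1) 1) :
    jacobiWeight a a t = (1 - t ^ 2) ^ a := by
  rw [jacobiWeight, ← Real.mul_rpow (by linarith [ht.2]) (by linarith [ht.1]),
    show (1 - t) * (1 + t) = 1 - t ^ 2 by ring]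

lemma jacobiMoment_self_recurrence {a : ℝ} (ha : -1 < a) (n : ℕ) :
    (n + 2 * a + 3) * jacobiMoment a a (n + 2) = (n + 1) * jacobiMoment a a n := by
  have hderiv : ∀ t ∈ Ioo (-1 : ℝ) 1,
      HasDerivAt (fun t => t ^ (n + 1) * (1 - t ^ 2) ^ (a + 1))
        (((n + 1) * t ^ n - (n + 2 * a + 3) * t ^ (n + 2)) * jacobiWeight a a t) t := by
    intro t ht
    have hpos : 0 < 1 - t ^ 2 := by nlinarith [ht.1, ht.2]
    refine ((hasDerivAt_pow (n + 1) t).mul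
      (((hasDerivAt_pow 2 t).const_sub 1).rpow_const (Or.inl hpos.ne'))).congr_deriv ?_
    rw [jacobiWeight_self (Ioo_subset_Icc_self ht), Real.rpow_add_one hpos.ne',
      add_sub_cancel_right]
    push_cast
    ring
  have hint : ∀ m : ℕ, IntervalIntegrable (fun t => t ^ m * jacobiWeight a a t) volume (-1) 1 :=
    fun m => intervalIntegrable_mul_jacobiWeight ha ha (continuous_pow m)
  have hcont : ContinuousOn (fun t : ℝ => t ^ (n + 1) * (1 - t ^ 2) ^ (a + 1)) (Icc (-1) 1) :=
    ((continuous_pow (n + 1)).mul ((continuous_const.sub (continuous_pow 2)).rpow_const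
      fun _ => Or.inr (by linarith))).continuousOn
  have hFTC := intervalIntegral.integral_eq_sub_of_hasDerivAt_of_le (by norm_num) hcont hderiv
    (by simpa only [sub_mul, mul_assoc] using
      ((hint n).const_mul (n + 1 : ℝ)).sub ((hint (n + 2)).const_mul (n + 2 * a + 3)))
  simp only [sub_mul, mul_assoc] at hFTC
  rw [intervalIntegral.integral_sub ((hint n).const_mul _) ((hint (n + 2)).const_mul _),
    intervalIntegral.integral_const_mul, intervalIntegral.integral_const_mul] at hFTC
  simp only [one_pow, sub_self, Real.zero_rpow (by linarith : a + 1 ≠ 0), mul_zero, even_two,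
    Even.neg_pow] at hFTC
  rw [jacobiMoment, jacobiMoment]
  linarith

lemma jacobiMoment_zero {a b : ℝ} (ha : 0 < a) (hb : 0 < b) :
    jacobiMoment (a - 1) (b - 1) 0
      = 2 ^ (a + b - 1) * (Real.Gamma a * Real.Gamma b / Real.Gamma (a + b)) := by
  have hsub := intervalIntegral.integral_comp_mul_add (a := 0) (b := 1)
    (jacobiWeight (a - 1) (b - 1)) two_ne_zero (-1)
  have hscale : ∀ s ∈ Ioo (0:ℝ) 1, jacobiWeight (a - 1) (b - 1) (2 * s + -1)
      = 2 ^ (a - 1) * 2 ^ (b - 1) * (s ^ (b - 1) * (1 - s) ^ (a - 1)) := by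
    intro s hs
    rw [jacobiWeight, show 1 - (2 * s + -1) = 2 * (1 - s) by ring,
      show 1 + (2 * s + -1) = 2 * s by ring, Real.mul_rpow zero_le_two (by linarith [hs.2]),
      Real.mul_rpow zero_le_two hs.1.le]
    ring
  rw [intervalIntegral.integral_congr_Ioo_of_le zero_le_one hscale,
    intervalIntegral.integral_const_mul] at hsub
  norm_num at hsub
  have hbeta := Real.Gamma_mul_Gamma_eq_integral hb ha
  rw [jacobiMoment]
  simp only [pow_zero, one_mul]
  have hpow : (2:ℝ) ^ (a + b - 1) = 2 ^ (a - 1) * 2 ^ (b - 1) * 2 := by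
    rw [← Real.rpow_add two_pos, ← Real.rpow_add_one two_ne_zero]
    ring_nf
  rw [hpow, add_comm a b, mul_comm (Real.Gamma a), hbeta]
  field_simp
  linarith

noncomputable def dunklMoment (k : ℝ) (n : ℕ) : ℝ :=
  Real.Gamma (k + 1/2) / (Real.Gamma (1/2) * Real.Gamma k) * jacobiMoment (k - 1) k n

open Real in
lemma dunklMoment_zero {k : ℝ} (hk : 0 < k) : dunklMoment k 0 = 1 := by
  have h := jacobiMoment_zero hk (b := k + 1) (by linarith)
  rw [add_sub_cancel_right, show k + (k + 1) = 2 * k + 1 by ring, Gamma_add_one hk.ne',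
    Gamma_add_one (by positivity), show 2 * k + 1 - 1 = 2 * k by ring] at h
  have hpow : (2 : ℝ) ^ (2 * k) * 2 ^ (1 - 2 * k) = 2 := by
    rw [← rpow_add two_pos, add_sub_cancel, rpow_one]
  have hdup := Gamma_mul_Gamma_add_half k
  rw [dunklMoment, h, Gamma_one_half_eq]
  generalize Gamma (k + 1 / 2) = A at hdup ⊢
  field_simp
  linear_combination (2 : ℝ) ^ (2 * k) * hdup + Gamma (2 * k) * √π * hpow

lemma dunklMoment_succ {k : ℝ} (hk : 0 < k) (n : ℕ) :
    (n + 1 + k * (1 - (-1) ^ (n + 1))) * dunklMoment k (n + 1) = (n + 1) * dunklMoment k n := by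
  have hsplit (m : ℕ) : jacobiMoment (k - 1) k m
      = jacobiMoment (k - 1) (k - 1) m + jacobiMoment (k - 1) (k - 1) (m + 1) := by
    simpa only [sub_add_cancel] using
      jacobiMoment_add_one_right (a := k - 1) (b := k - 1) (by linarith) (by linarith) m
  simp only [dunklMoment, hsplit]
  rcases Nat.even_or_odd n with hn | hn
  · rw [jacobiMoment_self_of_odd _ hn.add_one, hn.add_one.neg_one_pow]
    linear_combination (Real.Gamma (k + 1/2) / (Real.Gamma (1/2) * Real.Gamma k)) *
      jacobiMoment_self_recurrence (a := k - 1) (by linarith) n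
  · rw [jacobiMoment_self_of_odd _ hn, jacobiMoment_self_of_odd _ (hn.add_one.add_one),
      hn.add_one.neg_one_pow]
    ring

noncomputable def intertwinerPoly (k : ℝ) (p : ℝ[X]) : ℝ[X] :=
  p.sum fun n a => C (a * dunklMoment k n) * X ^ n

lemma coeff_intertwinerPoly (k : ℝ) (p : ℝ[X]) (n : ℕ) :
    (intertwinerPoly k p).coeff n = p.coeff n * dunklMoment k n := by
  simp only [intertwinerPoly, Polynomial.sum, finsetSum_coeff, coeff_C_mul_X_pow,
    Finset.sum_ite_eq, mem_support_iff]
  split_ifs with h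
  · rfl
  · rw [not_not.mp h, zero_mul]

lemma dunklV1_eq_eval {k : ℝ} (hk : 0 < k) (p : ℝ[X]) :
    dunklV1 k p = fun x => (intertwinerPoly k p).eval x := by
  funext x
  have hint (n : ℕ) : IntervalIntegrable
      (fun t => p.coeff n * x ^ n * (t ^ n * jacobiWeight (k - 1) k t)) volume (-1) 1 :=
    (intervalIntegrable_mul_jacobiWeight (by linarith) (by linarith) (continuous_pow n)).const_mul _
  have hexpand (t : ℝ) : p.eval (x * t) * (1 - t) ^ (k - 1) * (1 + t) ^ k
      = ∑ n ∈ p.support, p.coeff n * x ^ n * (t ^ n * jacobiWeight (k - 1) k t) := by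
    rw [eval_eq_sum, Polynomial.sum, Finset.sum_mul, Finset.sum_mul]
    exact Finset.sum_congr rfl fun n _ => by rw [jacobiWeight, mul_pow]; ring
  simp only [dunklV1, hexpand, intertwinerPoly, Polynomial.sum, eval_finsetSum, eval_C_mul,
    eval_X_pow, intervalIntegral.integral_finsetSum fun n _ => hint n, Finset.mul_sum,
    intervalIntegral.integral_const_mul, dunklMoment, jacobiMoment]
  exact Finset.sum_congr rfl fun n _ => by ring

/-- `T` on polynomials: `divX` divides exactly, as `q - q(-X)` has no constant term. -/
noncomputable def dunklPoly (k : ℝ) (q : ℝ[X]) : ℝ[X] :=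
  derivative q + C k * divX (q - q.comp (-X))

lemma coeff_dunklPoly (k : ℝ) (q : ℝ[X]) (n : ℕ) :
    (dunklPoly k q).coeff n = (n + 1 + k * (1 - (-1) ^ (n + 1))) * q.coeff (n + 1) := by
  rw [dunklPoly, coeff_add, coeff_C_mul, coeff_derivative, coeff_divX, coeff_sub, coeff_comp_neg_X]
  ring

lemma dunklT1_eval (k : ℝ) (q : ℝ[X]) {x : ℝ} (hx : x ≠ 0) :
    dunklT1 k (fun y => q.eval y) x = (dunklPoly k q).eval x := by
  have hodd := congrArg (eval x) (divX_mul_X_add (q - q.comp (-X)))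
  rw [coeff_sub, coeff_comp_neg_X, pow_zero, one_mul, sub_self, C_0, add_zero, eval_mul, eval_X,
    eval_sub, eval_comp, eval_neg, eval_X] at hodd
  rw [dunklT1, Polynomial.deriv, dunklPoly, eval_add, eval_mul, eval_C, ← hodd]
  field_simp

lemma dunklPoly_intertwinerPoly {k : ℝ} (hk : 0 < k) (p : ℝ[X]) :
    dunklPoly k (intertwinerPoly k p) = intertwinerPoly k (derivative p) := by
  ext n
  rw [coeff_dunklPoly, coeff_intertwinerPoly, coeff_intertwinerPoly, coeff_derivative]
  linear_combination p.coeff (n + 1) * dunklMoment_succ hk n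

theorem rank_one_intertwining (k : ℝ) (hk : 0 < k) :
    (∀ x : ℝ, dunklV1 k 1 x = 1) ∧
    (∀ (p : Polynomial ℝ) (x : ℝ), x ≠ 0 →
      dunklT1 k (dunklV1 k p) x = dunklV1 k p.derivative x) := by
  refine ⟨fun x => ?_, fun p x hx => ?_⟩
  · rw [dunklV1_eq_eval hk, intertwinerPoly, ← C_1, sum_C_index (by simp)]
    simp [dunklMoment_zero hk]
  · rw [dunklV1_eq_eval hk, dunklV1_eq_eval hk, dunklT1_eval k _ hx, dunklPoly_intertwinerPoly hk]
end

section
/- For k > 0 and each natural number n, V_k(xⁿ) = c_n · xⁿ where c_n = (Γ(k+1/2)/(Γ(1/2)Γ(k))) ∫₋₁¹ tⁿ (1-t)^{k-1}(1+t)^k dt; explicitly c_{2j} = (1/2)_j/(k+1/2)_j and c_{2j+1} = (1/2)_{j+1}/((k+1/2)_{j+1}) · 1, i.e. c_n is given by ratios of Pochhammer symbols, and in particular 0 < c_n ≤ 1 with c₀ = 1. -/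
open MeasureTheory intervalIntegral Set Polynomial

theorem integral_rpow_mul_one_sub_rpow {a b : ℝ} (ha : 0 < a) (hb : 0 < b) :
    ∫ x in (0:ℝ)..1, x ^ (a - 1) * (1 - x) ^ (b - 1)
      = Real.Gamma a * Real.Gamma b / Real.Gamma (a + b) := by
  have hB : ((∫ x in (0:ℝ)..1, x ^ (a - 1) * (1 - x) ^ (b - 1) : ℝ) : ℂ)
      = Complex.betaIntegral a b := by
    rw [Complex.betaIntegral, ← intervalIntegral.integral_ofReal]
    refine integral_congr fun x hx => ?_
    rw [uIcc_of_le zero_le_one] at hx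
    push_cast [Complex.ofReal_cpow hx.1, Complex.ofReal_cpow (sub_nonneg.2 hx.2)]
    rfl
  have hΓ := Complex.Gamma_mul_Gamma_eq_betaIntegral (s := a) (t := b) (by simpa) (by simpa)
  rw [← hB, ← Complex.ofReal_add, Complex.Gamma_ofReal, Complex.Gamma_ofReal,
    Complex.Gamma_ofReal] at hΓ
  rw [eq_div_iff (Real.Gamma_pos_of_pos (add_pos ha hb)).ne', mul_comm]
  exact_mod_cast hΓ.symm

theorem monotoneOn_ascPochhammer_eval {S : Type*} [Semiring S] [PartialOrder S]
    [IsStrictOrderedRing S] (n : ℕ) : MonotoneOn (ascPochhammer S n).eval (Ioi 0) := by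
  induction n with
  | zero => simp [monotoneOn_const]
  | succ n ih =>
    intro a (ha : 0 < a) b (hb : 0 < b) hab
    simp_rw [ascPochhammer_succ_eval]
    exact mul_le_mul (ih ha hb hab) (by gcongr) (by positivity) (ascPochhammer_pos n b hb).le

noncomputable def weightMoment (k : ℝ) (m : ℕ) : ℝ :=
  ∫ t in (-1:ℝ)..1, t ^ m * (1 - t ^ 2) ^ (k - 1)

noncomputable def dunklEigenvalue (k : ℝ) (n : ℕ) : ℝ :=
  Real.Gamma (k + 1/2) / (Real.Gamma (1/2) * Real.Gamma k) *
    ∫ t in (-1:ℝ)..1, t ^ n * (1 - t) ^ (k - 1) * (1 + t) ^ k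

section
variable {k : ℝ}

theorem intervalIntegrable_mul_one_sub_sq_rpow_zero_one (hk : 0 < k) {f : ℝ → ℝ}
    (hf : Continuous f) :
    IntervalIntegrable (fun t => f t * (1 - t ^ 2) ^ (k - 1)) volume 0 1 := by
  have hsing : IntervalIntegrable (fun t : ℝ => (1 - t) ^ (k - 1)) volume 0 1 := by
    have := (intervalIntegrable_rpow' (a := 0) (b := 1) (by linarith : -1 < k - 1)).comp_sub_left 1
    simpa using this.symm
  have hcont : ContinuousOn (fun t : ℝ => f t * (1 + t) ^ (k - 1)) (uIcc 0 1) := by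
    refine hf.continuousOn.mul (ContinuousOn.rpow_const (by fun_prop) fun t ht => Or.inl ?_)
    rw [uIcc_of_le zero_le_one] at ht
    linarith [ht.1]
  refine (hsing.mul_continuousOn hcont).congr_ae ?_
  refine (ae_restrict_iff' measurableSet_uIoc).mpr (ae_of_all _ fun t ht => ?_)
  rw [uIoc_of_le zero_le_one] at ht
  dsimp only
  rw [show 1 - t ^ 2 = (1 - t) * (1 + t) by ring,
    Real.mul_rpow (by linarith [ht.2]) (by linarith [ht.1])]
  ring

theorem intervalIntegrable_mul_one_sub_sq_rpow (hk : 0 < k) {f : ℝ → ℝ} (hf : Continuous f) :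
    IntervalIntegrable (fun t => f t * (1 - t ^ 2) ^ (k - 1)) volume (-1) 1 := by
  refine IntervalIntegrable.trans ?_ (intervalIntegrable_mul_one_sub_sq_rpow_zero_one hk hf)
  have := intervalIntegrable_mul_one_sub_sq_rpow_zero_one hk (hf.comp continuous_neg)
  rw [IntervalIntegrable.iff_comp_neg] at this
  simpa using this.symm

theorem intervalIntegrable_pow_mul_one_sub_sq_rpow (hk : 0 < k) (m : ℕ) :
    IntervalIntegrable (fun t : ℝ => t ^ m * (1 - t ^ 2) ^ (k - 1)) volume (-1) 1 :=
  intervalIntegrable_mul_one_sub_sq_rpow hk (continuous_pow m)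

theorem weightMoment_eq_zero_of_odd {m : ℕ} (hm : Odd m) : weightMoment k m = 0 := by
  have h := integral_comp_neg (a := -1) (b := 1) fun t : ℝ => t ^ m * (1 - t ^ 2) ^ (k - 1)
  simp only [neg_neg, hm.neg_pow, neg_sq, neg_mul, intervalIntegral.integral_neg] at h
  rw [weightMoment]
  linarith

theorem weightMoment_add_two (hk : 0 < k) (m : ℕ) :
    (2 * k + m + 1) * weightMoment k (m + 2) = (m + 1) * weightMoment k m := by
  set g : ℝ → ℝ := fun t => t ^ (m + 1) * (1 - t ^ 2) ^ k
  set g' : ℝ → ℝ := fun t =>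
    (m + 1) * (t ^ m * (1 - t ^ 2) ^ (k - 1))
      - (2 * k + m + 1) * (t ^ (m + 2) * (1 - t ^ 2) ^ (k - 1))
  have hcont : Continuous g :=
    (continuous_pow _).mul ((continuous_const.sub (continuous_pow 2)).rpow_const
      fun _ => Or.inr hk.le)
  have hderiv : ∀ t ∈ Ioo (-1 : ℝ) 1, HasDerivAt g (g' t) t := by
    intro t ht
    have hpos : 0 < 1 - t ^ 2 := by nlinarith [ht.1, ht.2]
    have := (hasDerivAt_pow (m + 1) t).mul
      (((hasDerivAt_pow 2 t).const_sub 1).rpow_const (p := k) (Or.inl hpos.ne'))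
    refine this.congr_deriv ?_
    rw [show (1 - t ^ 2) ^ k = (1 - t ^ 2) ^ (k - 1) * (1 - t ^ 2) by
      rw [← Real.rpow_add_one hpos.ne']; ring_nf]
    push_cast
    ring
  have hint := fun m => intervalIntegrable_pow_mul_one_sub_sq_rpow hk m
  have hftc := integral_eq_sub_of_hasDerivAt_of_le (by norm_num) hcont.continuousOn hderiv
    (((hint m).const_mul _).sub ((hint (m + 2)).const_mul _))
  rw [integral_sub ((hint m).const_mul _) ((hint (m + 2)).const_mul _),
    intervalIntegral.integral_const_mul, intervalIntegral.integral_const_mul] at hftc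
  simp only [one_pow, sub_self, Real.zero_rpow hk.ne', mul_zero, even_two, Even.neg_pow, g] at hftc
  rw [weightMoment, weightMoment]
  linarith

theorem weightMoment_zero (hk : 0 < k) :
    weightMoment k 0 = Real.Gamma (1 / 2) * Real.Gamma k / Real.Gamma (k + 1 / 2) := by
  have hsub : weightMoment k 0 = 2 * ∫ x in (0:ℝ)..1, (1 - (2 * x - 1) ^ 2) ^ (k - 1) := by
    rw [integral_comp_mul_sub (fun t => (1 - t ^ 2) ^ (k - 1)) two_ne_zero 1]
    norm_num [weightMoment]
    ring
  have hbeta : ∫ x in (0:ℝ)..1, (1 - (2 * x - 1) ^ 2) ^ (k - 1)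
      = (4 : ℝ) ^ (k - 1) * (Real.Gamma k * Real.Gamma k / Real.Gamma (2 * k)) := by
    rw [two_mul k, ← integral_rpow_mul_one_sub_rpow hk hk,
      ← intervalIntegral.integral_const_mul]
    refine integral_congr fun x hx => ?_
    rw [uIcc_of_le zero_le_one] at hx
    rw [show 1 - (2 * x - 1) ^ 2 = 4 * (x * (1 - x)) by ring,
      Real.mul_rpow (by norm_num) (mul_nonneg hx.1 (sub_nonneg.2 hx.2)),
      Real.mul_rpow hx.1 (sub_nonneg.2 hx.2)]
  have hfour : (4 : ℝ) ^ (k - 1) * 2 ^ (1 - 2 * k) = 2⁻¹ := by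
    rw [show (4 : ℝ) = 2 ^ (2 : ℝ) by norm_num, ← Real.rpow_mul zero_le_two,
      ← Real.rpow_add zero_lt_two, show 2 * (k - 1) + (1 - 2 * k) = -1 by ring, Real.rpow_neg_one]
  have hΓ2k : Real.Gamma (2 * k) ≠ 0 := (Real.Gamma_pos_of_pos (by positivity)).ne'
  have hΓk : Real.Gamma (k + 1 / 2) ≠ 0 := (Real.Gamma_pos_of_pos (by positivity)).ne'
  rw [hsub, hbeta, eq_div_iff hΓk, Real.Gamma_one_half_eq]
  calc 2 * ((4 : ℝ) ^ (k - 1) * (Real.Gamma k * Real.Gamma k / Real.Gamma (2 * k)))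
        * Real.Gamma (k + 1 / 2)
      = 2 * 4 ^ (k - 1) * Real.Gamma k * (Real.Gamma k * Real.Gamma (k + 1 / 2))
        / Real.Gamma (2 * k) := by ring
    _ = 2 * (4 ^ (k - 1) * 2 ^ (1 - 2 * k)) * Real.Gamma k * √Real.pi := by
      rw [Real.Gamma_mul_Gamma_add_half]; field_simp
    _ = √Real.pi * Real.Gamma k := by rw [hfour]; ring

theorem weightMoment_two_mul (hk : 0 < k) (j : ℕ) :
    weightMoment k (2 * j) = weightMoment k 0 * (ascPochhammer ℝ j).eval (1 / 2)
      / (ascPochhammer ℝ j).eval (k + 1 / 2) := by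
  induction j with
  | zero => simp
  | succ j ih =>
    have hrec := weightMoment_add_two hk (2 * j)
    have hpos := ascPochhammer_pos j (k + 1 / 2) (by positivity)
    rw [mul_add_one, ascPochhammer_succ_eval, ascPochhammer_succ_eval]
    rw [ih] at hrec
    set P := (ascPochhammer ℝ j).eval (1 / 2)
    set Q := (ascPochhammer ℝ j).eval (k + 1 / 2)
    push_cast at hrec ⊢
    field_simp at hrec ⊢
    linear_combination hrec

theorem dunklV1_X_pow (n : ℕ) (x : ℝ) :
    dunklV1 k (X ^ n) x = dunklEigenvalue k n * x ^ n := by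
  rw [dunklV1, dunklEigenvalue, mul_assoc, ← intervalIntegral.integral_mul_const]
  congr 1
  refine integral_congr fun t _ => ?_
  simp only [eval_pow, eval_X]
  ring

theorem dunklEigenvalue_eq_weightMoment (hk : 0 < k) (n : ℕ) :
    dunklEigenvalue k n = Real.Gamma (k + 1/2) / (Real.Gamma (1/2) * Real.Gamma k) *
      (weightMoment k n + weightMoment k (n + 1)) := by
  rw [dunklEigenvalue, weightMoment, weightMoment, ← integral_add
    (intervalIntegrable_pow_mul_one_sub_sq_rpow hk n)
    (intervalIntegrable_pow_mul_one_sub_sq_rpow hk (n + 1))]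
  congr 1
  refine integral_congr fun t ht => ?_
  rw [uIcc_of_le (by norm_num)] at ht
  have h₁ : 0 ≤ 1 - t := by linarith [ht.2]
  have h₂ : 0 ≤ 1 + t := by linarith [ht.1]
  rw [show 1 - t ^ 2 = (1 - t) * (1 + t) by ring, Real.mul_rpow h₁ h₂,
    show k = k - 1 + 1 by ring, Real.rpow_add_one' h₂ (by simpa using hk.ne'), sub_add_cancel]
  ring

theorem dunklEigenvalue_two_mul (hk : 0 < k) (j : ℕ) :
    dunklEigenvalue k (2 * j)
      = (ascPochhammer ℝ j).eval (1 / 2) / (ascPochhammer ℝ j).eval (k + 1 / 2) := by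
  have hΓ : Real.Gamma (k + 1 / 2) ≠ 0 := (Real.Gamma_pos_of_pos (by positivity)).ne'
  have hΓk : Real.Gamma k ≠ 0 := (Real.Gamma_pos_of_pos hk).ne'
  have hΓh : Real.Gamma (1 / 2) ≠ 0 := (Real.Gamma_pos_of_pos (by norm_num)).ne'
  rw [dunklEigenvalue_eq_weightMoment hk, weightMoment_eq_zero_of_odd (odd_two_mul_add_one j),
    add_zero, weightMoment_two_mul hk, weightMoment_zero hk]
  field_simp

theorem dunklEigenvalue_two_mul_add_one (hk : 0 < k) (j : ℕ) :
    dunklEigenvalue k (2 * j + 1)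
      = (ascPochhammer ℝ (j + 1)).eval (1 / 2)
        / (ascPochhammer ℝ (j + 1)).eval (k + 1 / 2) := by
  rw [← dunklEigenvalue_two_mul hk, dunklEigenvalue_eq_weightMoment hk,
    dunklEigenvalue_eq_weightMoment hk, weightMoment_eq_zero_of_odd (odd_two_mul_add_one j),
    weightMoment_eq_zero_of_odd (odd_two_mul_add_one (j + 1))]
  ring_nf

theorem dunklEigenvalue_pos_and_le_one (hk : 0 < k) (n : ℕ) :
    0 < dunklEigenvalue k n ∧ dunklEigenvalue k n ≤ 1 := by
  obtain ⟨j, hj⟩ : ∃ j, dunklEigenvalue k n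
      = (ascPochhammer ℝ j).eval (1 / 2) / (ascPochhammer ℝ j).eval (k + 1 / 2) := by
    obtain ⟨j, rfl | rfl⟩ := Nat.even_or_odd' n
    · exact ⟨j, dunklEigenvalue_two_mul hk j⟩
    · exact ⟨j + 1, dunklEigenvalue_two_mul_add_one hk j⟩
  have hden := ascPochhammer_pos j (k + 1 / 2) (by positivity)
  rw [hj, div_le_one hden]
  exact ⟨div_pos (ascPochhammer_pos j _ (by norm_num)) hden,
    monotoneOn_ascPochhammer_eval j (by norm_num : (1:ℝ) / 2 ∈ Ioi 0)
      (by simp only [mem_Ioi]; positivity) (by linarith)⟩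

end

theorem rank_one_eigenvalues (k : ℝ) (hk : 0 < k) (n : ℕ) :
    let c : ℕ → ℝ := fun n =>
      (Real.Gamma (k + 1/2) / (Real.Gamma (1/2) * Real.Gamma k)) *
        ∫ t in (-1:ℝ)..1, t ^ n * (1 - t) ^ (k - 1) * (1 + t) ^ k
    (∀ x : ℝ, dunklV1 k (Polynomial.X ^ n) x = c n * x ^ n)
    ∧ (∀ j : ℕ, c (2 * j)
        = (ascPochhammer ℝ j).eval ((1:ℝ)/2) / (ascPochhammer ℝ j).eval (k + 1/2))
    ∧ (∀ j : ℕ, c (2 * j + 1)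
        = (ascPochhammer ℝ (j + 1)).eval ((1:ℝ)/2) / (ascPochhammer ℝ (j + 1)).eval (k + 1/2))
    ∧ 0 < c n ∧ c n ≤ 1 ∧ c 0 = 1 := by
  intro c
  have hc0 : dunklEigenvalue k 0 = 1 := by simpa using dunklEigenvalue_two_mul hk 0
  exact ⟨dunklV1_X_pow n, dunklEigenvalue_two_mul hk, dunklEigenvalue_two_mul_add_one hk,
    (dunklEigenvalue_pos_and_le_one hk n).1, (dunklEigenvalue_pos_and_le_one hk n).2, hc0⟩
end
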